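/- arXiv:2405.04999 — 4 statements merged into one kernel-verified Lean document; each statement's English description precedes it below -/
import Mathlib

section
/- For any n×n real matrix A with columns A_1,...,A_n, let H_1 be the linear span of columns A_2,...,A_n, let B be the (n-1)×(n-1) minor obtained by removing the first row and column of A, let X ∈ ℝ^{n-1} be the first column of A with its first entry removed, and let a_{11} be the (1,1) entry of A. If B is invertible and A is symmetric, then the distance from A_1 to H_1 equals |⟨B^{-1}X, X⟩ − a_{11}| / sqrt(1 + ‖B^{-1}X‖²). -/
/-!
Put `y = B⁻¹X` and `u = (1, -y)`. For `j ≥ 2`, symmetry of `A` gives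
`⟪A_j, u⟫ = (A u)_j = X_{j-1} - (B y)_{j-1} = 0`. Conversely, a vector `v ⊥ u` equals
`∑_{j ≥ 2} t_j A_j` for `t = B⁻¹ (v_2, …, v_n)`: the last `n - 1` coordinates agree by the choice
of `t`, and the first one is determined by `v ⊥ u`. So `H₁ = u^⊥`, and the distance from `A₁`
to this hyperplane is `|⟪u, A₁⟫| / ‖u‖ = |a₁₁ - ⟪y, X⟫| / √(1 + ‖y‖²)`.
-/

open Matrix RealInnerProductSpace

theorem Submodule.infDist_eq_norm_sub_of_sub_mem_orthogonal {𝕜 E : Type*} [RCLike 𝕜]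
    [NormedAddCommGroup E] [InnerProductSpace 𝕜 E] {K : Submodule 𝕜 E} {v w : E}
    (hw : w ∈ K) (hvw : v - w ∈ Kᗮ) : Metric.infDist v K = ‖v - w‖ := by
  rw [Metric.infDist_eq_iInf, (K.norm_eq_iInf_iff_inner_eq_zero hw).2
    fun k hk => K.inner_left_of_mem_orthogonal hk hvw]
  simp_rw [dist_eq_norm]
  rfl

theorem Submodule.infDist_orthogonal_singleton {E : Type*} [NormedAddCommGroup E]
    [InnerProductSpace ℝ E] (u v : E) :
    Metric.infDist v (ℝ ∙ u)ᗮ = |⟪u, v⟫| / ‖u‖ := by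
  set c := ⟪u, v⟫ / ‖u‖ ^ 2
  have hfoot : v - c • u ∈ (ℝ ∙ u)ᗮ := by
    rw [mem_orthogonal_singleton_iff_inner_right, inner_sub_right, real_inner_smul_right,
      real_inner_self_eq_norm_sq]
    rcases eq_or_ne u 0 with rfl | hu
    · simp
    · rw [div_mul_cancel₀ _ (by positivity), sub_self]
  have hnormal : v - (v - c • u) ∈ (ℝ ∙ u)ᗮᗮ := by
    rw [sub_sub_cancel]
    exact le_orthogonal_orthogonal _ (smul_mem _ _ (mem_span_singleton_self u))
  rw [infDist_eq_norm_sub_of_sub_mem_orthogonal hfoot hnormal, sub_sub_cancel, norm_smul,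
    Real.norm_eq_abs, abs_div, abs_of_nonneg (sq_nonneg ‖u‖)]
  rcases eq_or_ne ‖u‖ 0 with hu | hu
  · simp [hu]
  · field_simp

namespace Matrix

variable {R : Type*} [CommRing R] {n : ℕ}

theorem mulVec_cons_apply_zero (A : Matrix (Fin (n + 1)) (Fin (n + 1)) R) (a : R)
    (t : Fin n → R) : (A *ᵥ vecCons a t) 0 = A 0 0 * a + (fun j => A 0 j.succ) ⬝ᵥ t := by
  simp [mulVec, dotProduct, Fin.sum_univ_succ]

theorem mulVec_cons_apply_succ (A : Matrix (Fin (n + 1)) (Fin (n + 1)) R) (a : R)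
    (t : Fin n → R) (i : Fin n) :
    (A *ᵥ vecCons a t) i.succ = A i.succ 0 * a + (A.submatrix Fin.succ Fin.succ *ᵥ t) i := by
  simp [mulVec, dotProduct, Fin.sum_univ_succ]

/-- The vector `(1, -B⁻¹X)`, where `B` is `A` without its first row and column and `X` is the
first column of `A` without its first entry. -/
noncomputable def firstColumnNormal (A : Matrix (Fin (n + 1)) (Fin (n + 1)) R) :
    Fin (n + 1) → R :=
  vecCons 1 (-((A.submatrix Fin.succ Fin.succ)⁻¹ *ᵥ fun i => A i.succ 0))

variable {A : Matrix (Fin (n + 1)) (Fin (n + 1)) R}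

theorem mulVec_firstColumnNormal_succ (hB : IsUnit (A.submatrix Fin.succ Fin.succ).det)
    (i : Fin n) : (A *ᵥ firstColumnNormal A) i.succ = 0 := by
  rw [firstColumnNormal, mulVec_cons_apply_succ, mulVec_neg, mulVec_mulVec,
    mul_nonsing_inv _ hB, one_mulVec]
  simp

theorem col_succ_dotProduct_firstColumnNormal (hA : A.IsSymm)
    (hB : IsUnit (A.submatrix Fin.succ Fin.succ).det) (j : Fin n) :
    (fun i => A i j.succ) ⬝ᵥ firstColumnNormal A = 0 := by
  rw [← mulVec_firstColumnNormal_succ hB j]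
  exact congrArg (· ⬝ᵥ _) (funext fun i => hA.apply j.succ i)

theorem mulVec_cons_zero_inv_mulVec_tail (hA : A.IsSymm)
    (hB : IsUnit (A.submatrix Fin.succ Fin.succ).det) {v : Fin (n + 1) → R}
    (hv : v ⬝ᵥ firstColumnNormal A = 0) :
    A *ᵥ vecCons 0 ((A.submatrix Fin.succ Fin.succ)⁻¹ *ᵥ vecTail v) = v := by
  obtain ⟨a, w, rfl⟩ : ∃ a w, v = vecCons a w := ⟨_, _, (cons_head_tail v).symm⟩
  rw [firstColumnNormal, cons_dotProduct_cons, dotProduct_neg, mul_one, ← sub_eq_add_neg,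
    sub_eq_zero] at hv
  rw [tail_cons]
  ext i
  cases i using Fin.cases with
  | zero =>
    have hrow : (fun j : Fin n => A 0 j.succ) = fun i => A i.succ 0 :=
      funext fun j => hA.apply j.succ 0
    rw [mulVec_cons_apply_zero, mul_zero, zero_add, dotProduct_mulVec, hrow, ← mulVec_transpose,
      (hA.submatrix Fin.succ).inv.eq, cons_val_zero, hv, dotProduct_comm]
  | succ i =>
    rw [mulVec_cons_apply_succ, mul_zero, zero_add, mulVec_mulVec, mul_nonsing_inv _ hB,
      one_mulVec, cons_val_succ]

theorem toLp_mulVec_cons_zero_mem_span (A : Matrix (Fin (n + 1)) (Fin (n + 1)) ℝ)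
    (t : Fin n → ℝ) :
    WithLp.toLp 2 (A *ᵥ vecCons 0 t) ∈ Submodule.span ℝ
      {w : EuclideanSpace ℝ (Fin (n + 1)) | ∃ j : Fin (n + 1), j ≠ 0 ∧ ∀ i, w i = A i j} := by
  have hsum : WithLp.toLp 2 (A *ᵥ vecCons 0 t)
      = ∑ j, t j • (WithLp.toLp 2 fun i => A i j.succ : EuclideanSpace ℝ (Fin (n + 1))) := by
    ext i
    simp [mulVec, dotProduct, Fin.sum_univ_succ, mul_comm]
  rw [hsum]
  exact Submodule.sum_smul_mem _ _ fun j _ =>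
    Submodule.subset_span ⟨j.succ, Fin.succ_ne_zero j, fun i => rfl⟩

theorem span_columns_ne_zero_eq_orthogonal {A : Matrix (Fin (n + 1)) (Fin (n + 1)) ℝ}
    (hA : A.IsSymm) (hB : IsUnit (A.submatrix Fin.succ Fin.succ).det) :
    Submodule.span ℝ
        {w : EuclideanSpace ℝ (Fin (n + 1)) | ∃ j : Fin (n + 1), j ≠ 0 ∧ ∀ i, w i = A i j}
      = (ℝ ∙ WithLp.toLp 2 (firstColumnNormal A))ᗮ := by
  apply le_antisymm
  · rw [Submodule.span_le]
    rintro w ⟨j, hj, hw⟩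
    obtain ⟨j, rfl⟩ := Fin.exists_succ_eq.2 hj
    rw [SetLike.mem_coe, Submodule.mem_orthogonal_singleton_iff_inner_right,
      EuclideanSpace.inner_eq_star_dotProduct, star_trivial, show w.ofLp = _ from funext hw]
    exact col_succ_dotProduct_firstColumnNormal hA hB j
  · intro v hv
    rw [Submodule.mem_orthogonal_singleton_iff_inner_right,
      EuclideanSpace.inner_eq_star_dotProduct, star_trivial] at hv
    rw [← WithLp.toLp_ofLp (p := 2) v, ← mulVec_cons_zero_inv_mulVec_tail hA hB hv]
    exact toLp_mulVec_cons_zero_mem_span A _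

end Matrix

/-- Fact 2.4: For a symmetric `(n+1)×(n+1)` matrix `A`, with `B` the minor obtained by
removing the first row and column (assumed invertible), `X` the first column with
first entry removed, the distance from the first column `A₁` to the span `H₁` of the
other columns equals `|⟨B⁻¹X, X⟩ − a₁₁| / √(1 + ‖B⁻¹X‖²)`. -/
theorem stmt0 (n : ℕ) (A : Matrix (Fin (n + 1)) (Fin (n + 1)) ℝ) (hA : A.IsSymm)
    (B : Matrix (Fin n) (Fin n) ℝ) (hB : B = fun i j => A i.succ j.succ)
    (hBinv : IsUnit B.det)
    (X : Fin n → ℝ) (hX : X = fun i => A i.succ 0)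
    (A1 : EuclideanSpace ℝ (Fin (n + 1))) (hA1 : ∀ i, A1 i = A i 0)
    (H1 : Submodule ℝ (EuclideanSpace ℝ (Fin (n + 1))))
    (hH1 : H1 = Submodule.span ℝ
      {w : EuclideanSpace ℝ (Fin (n + 1)) | ∃ j : Fin (n + 1), j ≠ 0 ∧ ∀ i, w i = A i j}) :
    Metric.infDist A1 (H1 : Set (EuclideanSpace ℝ (Fin (n + 1))))
      = |(∑ i, B⁻¹.mulVec X i * X i) - A 0 0| /
        Real.sqrt (1 + ∑ i, (B⁻¹.mulVec X i) ^ 2) := by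
  subst hB hX hH1
  have hA1 : A1 = WithLp.toLp 2 (vecCons (A 0 0) fun i => A i.succ 0) := by
    ext i
    cases i using Fin.cases <;> simp [hA1]
  rw [span_columns_ne_zero_eq_orthogonal hA hBinv, Submodule.infDist_orthogonal_singleton, hA1,
    EuclideanSpace.inner_eq_star_dotProduct, star_trivial, EuclideanSpace.norm_eq,
    firstColumnNormal, cons_dotProduct_cons, mul_one, dotProduct_neg, dotProduct_comm,
    ← sub_eq_add_neg, abs_sub_comm, Fin.sum_univ_succ]
  simp only [cons_val_zero, cons_val_succ, norm_one, one_pow, Real.norm_eq_abs, sq_abs,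
    Pi.neg_apply, neg_sq]
  rfl
end

section
/- Let M be an n×n real symmetric matrix with eigenvalue λ and corresponding eigenvector u (normalized so ‖u‖=1). Fix j ∈ [n], and let λ' be an eigenvalue of the principal minor M^{(j)} (M with the j-th row and column removed) with unit eigenvector v. Let X^{(j)} ∈ ℝ^{n-1} denote the j-th column of M with its j-th entry removed. Then |⟨v, X^{(j)}⟩| ≤ |λ − λ'| / |u_j|, provided u_j ≠ 0. -/
open MeasureTheory

/-!
Write `A` for the minor `M⁽ʲ⁾`, `X` for the column `X⁽ʲ⁾` and `w` for `u` with its `j`-th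
coordinate removed. Deleting row `j` from `M u = λ u` gives `A w = λ w - u_j X`. Pairing with `v`
and using the symmetry of `A` to move it onto `v`, where it acts by `λ'`, yields
`u_j ⟨v, X⟩ = (λ - λ') ⟨v, w⟩`; finally `|⟨v, w⟩| ≤ ‖v‖ ‖w‖ ≤ 1` by Cauchy–Schwarz.
-/

namespace Matrix

variable {R : Type*} [CommRing R] {n : ℕ}

theorem submatrix_succAbove_mulVec_comp_succAbove (M : Matrix (Fin (n + 1)) (Fin (n + 1)) R)
    (j : Fin (n + 1)) (u : Fin (n + 1) → R) (i : Fin n) :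
    (M.submatrix j.succAbove j.succAbove *ᵥ (u ∘ j.succAbove)) i =
      (M *ᵥ u) (j.succAbove i) - M (j.succAbove i) j * u j := by
  simp only [mulVec, dotProduct, Fin.sum_univ_succAbove _ j, submatrix_apply, Function.comp_apply]
  ring

theorem mul_dotProduct_col_eq_of_eigen_minor {M : Matrix (Fin (n + 1)) (Fin (n + 1)) R}
    (hM : M.IsSymm) {lam lam' : R} (j : Fin (n + 1)) {u : Fin (n + 1) → R} {v : Fin n → R}
    (hu : M *ᵥ u = lam • u) (hv : M.submatrix j.succAbove j.succAbove *ᵥ v = lam' • v) :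
    u j * (v ⬝ᵥ fun i => M (j.succAbove i) j) = (lam - lam') * (v ⬝ᵥ (u ∘ j.succAbove)) := by
  set A := M.submatrix j.succAbove j.succAbove
  have hAw : A *ᵥ (u ∘ j.succAbove) =
      lam • (u ∘ j.succAbove) - u j • fun i => M (j.succAbove i) j := by
    ext i
    simp only [A, submatrix_succAbove_mulVec_comp_succAbove, hu, Pi.sub_apply, Pi.smul_apply,
      Function.comp_apply, smul_eq_mul]
    ring
  have hvA : v ᵥ* A = lam' • v := by
    rw [← mulVec_transpose, (hM.submatrix j.succAbove).eq, hv]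
  have hpair := dotProduct_mulVec v A (u ∘ j.succAbove)
  rw [hAw, hvA, dotProduct_sub, dotProduct_smul, dotProduct_smul, smul_dotProduct] at hpair
  simp only [smul_eq_mul] at hpair
  linear_combination -hpair

end Matrix

theorem EuclideanSpace.norm_comp_succAbove_le {n : ℕ} (u : EuclideanSpace ℝ (Fin (n + 1)))
    (j : Fin (n + 1)) : ‖WithLp.toLp 2 (u ∘ j.succAbove)‖ ≤ ‖u‖ := by
  simp only [EuclideanSpace.norm_eq, Function.comp_apply]
  gcongr
  rw [Fin.sum_univ_succAbove (fun k => ‖u k‖ ^ 2) j]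
  exact le_add_of_nonneg_left (sq_nonneg _)

theorem abs_dotProduct_comp_succAbove_le {n : ℕ} (u : EuclideanSpace ℝ (Fin (n + 1)))
    (v : EuclideanSpace ℝ (Fin n)) (j : Fin (n + 1)) :
    |v ⬝ᵥ (u ∘ j.succAbove)| ≤ ‖v‖ * ‖u‖ := by
  calc |v ⬝ᵥ (u ∘ j.succAbove)| = |inner ℝ v (WithLp.toLp 2 (u ∘ j.succAbove))| := by
        rw [EuclideanSpace.inner_eq_star_dotProduct, dotProduct_comm]; rfl
    _ ≤ ‖v‖ * ‖WithLp.toLp 2 (u ∘ j.succAbove)‖ := abs_real_inner_le_norm _ _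
    _ ≤ ‖v‖ * ‖u‖ := by gcongr; exact EuclideanSpace.norm_comp_succAbove_le u j

/-- Fact 7.3 (Tao–Vu): Let `M` be a real symmetric `(n+1)×(n+1)` matrix with eigenvalue
`lam` and unit eigenvector `u`, let `lam'` be an eigenvalue of the principal minor
`M⁽ʲ⁾` (the `j`-th row and column removed) with unit eigenvector `v`, and let `X⁽ʲ⁾`
be the `j`-th column of `M` with its `j`-th entry removed. If `u j ≠ 0` then
`|⟨v, X⁽ʲ⁾⟩| ≤ |lam − lam'| / |u j|`. -/
theorem stmt2 (n : ℕ) (M : Matrix (Fin (n + 1)) (Fin (n + 1)) ℝ) (hM : M.IsSymm)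
    (lam lam' : ℝ) (j : Fin (n + 1))
    (u : EuclideanSpace ℝ (Fin (n + 1))) (hu : ‖u‖ = 1)
    (hueig : ∀ i, (∑ k, M i k * u k) = lam * u i)
    (v : EuclideanSpace ℝ (Fin n)) (hv : ‖v‖ = 1)
    (hveig : ∀ i, (∑ k, M (j.succAbove i) (j.succAbove k) * v k) = lam' * v i)
    (huj : u j ≠ 0) :
    |∑ i, v i * M (j.succAbove i) j| ≤ |lam - lam'| / |u j| := by
  have key := Matrix.mul_dotProduct_col_eq_of_eigen_minor hM j (u := u) (v := v)
    (lam := lam) (lam' := lam') (funext hueig) (funext hveig)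
  have hT : |v ⬝ᵥ (u ∘ j.succAbove)| ≤ 1 := by
    simpa [hu, hv] using abs_dotProduct_comp_succAbove_le u v j
  rw [le_div_iff₀ (abs_pos.mpr huj)]
  calc |∑ i, v i * M (j.succAbove i) j| * |u j|
      = |lam - lam'| * |v ⬝ᵥ (u ∘ j.succAbove)| := by
        rw [mul_comm, ← abs_mul, ← abs_mul]; exact congrArg abs key
    _ ≤ |lam - lam'| := mul_le_of_le_one_right (abs_nonneg _) hT
end

section
/- Let X = X₁ + X₂ where X₁, X₂ ∈ ℝⁿ are independent random vectors, let X₂' be an independent copy of X₂, and let M be an n×n real symmetric matrix, θ ∈ ℝ, u ∈ ℝⁿ. Then |E exp(2πiθ⟨M(X₁+X₂), X₁+X₂⟩ + ⟨X₁+X₂, u⟩)|² ≤ E_{X₂,X₂'}[exp(⟨X₂+X₂', u⟩) · |E_{X₁} exp(4πiθ⟨M(X₂−X₂'), X₁⟩ + 2⟨X₁, u⟩)|]. -/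
/-!
Let `f x y = e^{2πi⟨M(x+y), x+y⟩ + ⟨x+y, u⟩}` and `h x = E f(x, X₂)`. Cauchy–Schwarz in `X₁`
gives `|E f(X₁, X₂)|² ≤ E |h(X₁)|² = E f(X₁, X₂) conj f(X₁, X₂')`; integrating over `X₁` first
and taking absolute values bounds this by `E_{X₂,X₂'} |E_{X₁} f(X₁, X₂) conj f(X₁, X₂')|`.
For symmetric `M` the part of the phase quadratic in `x` cancels in `f(x, y) conj f(x, y')`,
leaving `f(0, y) conj f(0, y')`, of modulus `e^{⟨y+y', u⟩}`, times the phase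
`e^{4πi⟨M(y − y'), x⟩ + 2⟨x, u⟩}`.
-/

open MeasureTheory ProbabilityTheory Real Matrix ComplexConjugate

section Decoupling

variable {α β : Type*} [MeasurableSpace α] [MeasurableSpace β]

theorem sq_integral_le_integral_sq {μ : Measure α} [IsProbabilityMeasure μ] {g : α → ℝ}
    (hg : AEStronglyMeasurable g μ) (hg2 : Integrable (fun x => g x ^ 2) μ) :
    (∫ x, g x ∂μ) ^ 2 ≤ ∫ x, g x ^ 2 ∂μ := by
  have := variance_nonneg g μ
  rw [variance_eq_sub ((memLp_two_iff_integrable_sq hg).2 hg2)] at this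
  simpa using this

theorem ofReal_norm_integral_sq (ν : Measure β) [SFinite ν] (g : β → ℂ) :
    ((‖∫ y, g y ∂ν‖ ^ 2 : ℝ) : ℂ) = ∫ q, g q.1 * conj (g q.2) ∂(ν.prod ν) := by
  rw [integral_prod_mul (g := fun y => conj (g y)), integral_conj, Complex.mul_conj,
    Complex.normSq_eq_norm_sq]

theorem norm_integral_prod_sq_le {μ : Measure α} {ν : Measure β} [IsProbabilityMeasure μ]
    [SFinite ν] {f : α → β → ℂ} (hf : Integrable (fun p => f p.1 p.2) (μ.prod ν))
    (hff : Integrable (fun z : α × β × β => f z.1 z.2.1 * conj (f z.1 z.2.2))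
      (μ.prod (ν.prod ν))) :
    ‖∫ p, f p.1 p.2 ∂(μ.prod ν)‖ ^ 2
      ≤ ∫ q : β × β, ‖∫ x, f x q.1 * conj (f x q.2) ∂μ‖ ∂(ν.prod ν) := by
  set h : α → ℂ := fun x => ∫ y, f x y ∂ν
  have hh : ∀ x, ((‖h x‖ ^ 2 : ℝ) : ℂ) = ∫ q, f x q.1 * conj (f x q.2) ∂(ν.prod ν) :=
    fun x => ofReal_norm_integral_sq ν (f x)
  have hh_int : Integrable (fun x => ‖h x‖ ^ 2) μ :=
    hff.integral_prod_left.re.congr (.of_forall fun x => congrArg Complex.re (hh x).symm)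
  calc ‖∫ p, f p.1 p.2 ∂(μ.prod ν)‖ ^ 2 = ‖∫ x, h x ∂μ‖ ^ 2 := by rw [integral_prod _ hf]
    _ ≤ (∫ x, ‖h x‖ ∂μ) ^ 2 := by gcongr; exact norm_integral_le_integral_norm h
    _ ≤ ∫ x, ‖h x‖ ^ 2 ∂μ :=
      sq_integral_le_integral_sq hf.integral_prod_left.aestronglyMeasurable.norm hh_int
    _ = (∫ z : α × β × β, f z.1 z.2.1 * conj (f z.1 z.2.2) ∂(μ.prod (ν.prod ν))).re := by
      rw [integral_prod _ hff, ← Complex.ofReal_re (∫ x, _ ∂μ), ← integral_complex_ofReal]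
      exact congrArg Complex.re (integral_congr_ae (.of_forall hh))
    _ ≤ ‖∫ z : α × β × β, f z.1 z.2.1 * conj (f z.1 z.2.2) ∂(μ.prod (ν.prod ν))‖ :=
      Complex.re_le_norm _
    _ = ‖∫ q : β × β, ∫ x, f x q.1 * conj (f x q.2) ∂μ ∂(ν.prod ν)‖ := by
      rw [integral_prod_symm _ hff]
    _ ≤ _ := norm_integral_le_integral_norm _

end Decoupling

section SymmetricBilinear

variable {ι : Type*} [Fintype ι] {M : Matrix ι ι ℝ}

theorem Matrix.IsSymm.mulVec_dotProduct_comm (hM : M.IsSymm) (x y : ι → ℝ) :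
    M *ᵥ x ⬝ᵥ y = M *ᵥ y ⬝ᵥ x := by
  rw [dotProduct_comm, dotProduct_mulVec, ← mulVec_transpose, hM.eq]

theorem Matrix.IsSymm.quadForm_add_eq (hM : M.IsSymm) (x y y' : ι → ℝ) :
    M *ᵥ (x + y) ⬝ᵥ (x + y) = M *ᵥ (x + y') ⬝ᵥ (x + y')
      + (M *ᵥ y ⬝ᵥ y - M *ᵥ y' ⬝ᵥ y') + 2 * (M *ᵥ (y - y') ⬝ᵥ x) := by
  simp only [mulVec_add, mulVec_sub, add_dotProduct, dotProduct_add, sub_dotProduct]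
  rw [hM.mulVec_dotProduct_comm x y, hM.mulVec_dotProduct_comm x y']
  ring

end SymmetricBilinear

section QuadraticPhase

variable {ι : Type*} [Fintype ι] (M : Matrix ι ι ℝ) (u : ι → ℝ)

noncomputable def quadPhase (x : ι → ℝ) : ℂ :=
  Complex.exp (2 * π * Complex.I * (M *ᵥ x ⬝ᵥ x : ℝ) + (x ⬝ᵥ u : ℝ))

noncomputable def bilinPhase (d x : ι → ℝ) : ℂ :=
  Complex.exp (4 * π * Complex.I * (M *ᵥ d ⬝ᵥ x : ℝ) + (2 * (x ⬝ᵥ u) : ℝ))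

@[fun_prop]
theorem continuous_quadPhase : Continuous (quadPhase M u) := by
  unfold quadPhase; fun_prop

@[fun_prop]
theorem continuous_bilinPhase :
    Continuous fun p : (ι → ℝ) × (ι → ℝ) => bilinPhase M u p.1 p.2 := by
  unfold bilinPhase; fun_prop

theorem measurable_exp_mul_norm_integral_bilinPhase (ν : Measure (ι → ℝ)) [SFinite ν] :
    Measurable fun q : (ι → ℝ) × (ι → ℝ) =>
      exp ((q.1 + q.2) ⬝ᵥ u) * ‖∫ x, bilinPhase M u (q.1 - q.2) x ∂ν‖ :=
  (by fun_prop : Continuous fun q : (ι → ℝ) × (ι → ℝ) => exp ((q.1 + q.2) ⬝ᵥ u)).measurable.mul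
    ((continuous_bilinPhase M u).stronglyMeasurable.integral_prod_right'.measurable.norm.comp
      (by fun_prop))

theorem norm_quadPhase (x : ι → ℝ) : ‖quadPhase M u x‖ = exp (x ⬝ᵥ u) := by
  simp [quadPhase, Complex.norm_exp]

variable {M}

theorem quadPhase_add_mul_conj (hM : M.IsSymm) (x y y' : ι → ℝ) :
    quadPhase M u (x + y) * conj (quadPhase M u (x + y'))
      = quadPhase M u y * conj (quadPhase M u y') * bilinPhase M u (y - y') x := by
  simp only [quadPhase, bilinPhase, ← Complex.exp_conj, ← Complex.exp_add, map_add, map_mul,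
    Complex.conj_I, Complex.conj_ofReal, map_ofNat]
  congr 1
  rw [hM.quadForm_add_eq x y y']
  simp only [add_dotProduct]
  push_cast
  ring

theorem norm_integral_quadPhase_add_mul_conj (hM : M.IsSymm) (ν : Measure (ι → ℝ))
    (y y' : ι → ℝ) :
    ‖∫ x, quadPhase M u (x + y) * conj (quadPhase M u (x + y')) ∂ν‖
      = exp ((y + y') ⬝ᵥ u) * ‖∫ x, bilinPhase M u (y - y') x ∂ν‖ := by
  simp only [quadPhase_add_mul_conj u hM, integral_const_mul, norm_mul, Complex.norm_conj,
    norm_quadPhase, add_dotProduct, exp_add]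

theorem norm_integral_quadPhase_sq_le (hM : M.IsSymm) {ν₁ ν₂ : Measure (ι → ℝ)}
    [IsProbabilityMeasure ν₁] [SFinite ν₂]
    (h₁₂ : Integrable (fun p : (ι → ℝ) × (ι → ℝ) => exp ((p.1 + p.2) ⬝ᵥ u)) (ν₁.prod ν₂))
    (h₁ : Integrable (fun x : ι → ℝ => exp (2 * (x ⬝ᵥ u))) ν₁)
    (h₂₂ : Integrable (fun q : (ι → ℝ) × (ι → ℝ) => exp ((q.1 + q.2) ⬝ᵥ u)) (ν₂.prod ν₂)) :
    ‖∫ p, quadPhase M u (p.1 + p.2) ∂(ν₁.prod ν₂)‖ ^ 2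
      ≤ ∫ q : (ι → ℝ) × (ι → ℝ),
          exp ((q.1 + q.2) ⬝ᵥ u) * ‖∫ x, bilinPhase M u (q.1 - q.2) x ∂ν₁‖ ∂(ν₂.prod ν₂) := by
  have hf : Integrable (fun p : (ι → ℝ) × (ι → ℝ) => quadPhase M u (p.1 + p.2)) (ν₁.prod ν₂) :=
    h₁₂.mono' (by fun_prop : Continuous _).aestronglyMeasurable
      (.of_forall fun p => (norm_quadPhase M u _).le)
  have hff : Integrable (fun z : (ι → ℝ) × (ι → ℝ) × (ι → ℝ) =>
      quadPhase M u (z.1 + z.2.1) * conj (quadPhase M u (z.1 + z.2.2)))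
      (ν₁.prod (ν₂.prod ν₂)) := by
    refine (h₁.mul_prod h₂₂).mono' (by fun_prop : Continuous _).aestronglyMeasurable
      (.of_forall fun z => le_of_eq ?_)
    rw [norm_mul, Complex.norm_conj, norm_quadPhase, norm_quadPhase, ← exp_add, ← exp_add]
    simp only [add_dotProduct]
    ring_nf
  exact (norm_integral_prod_sq_le (f := fun x y => quadPhase M u (x + y)) hf hff).trans_eq
    (integral_congr_ae (.of_forall fun q => norm_integral_quadPhase_add_mul_conj u hM ν₁ q.1 q.2))

end QuadraticPhase

theorem stmt5_general (n : ℕ) (Ω : Type*) [MeasurableSpace Ω] (μ : Measure Ω)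
    [IsProbabilityMeasure μ]
    (X₁ X₂ X₂' : Ω → Fin n → ℝ)
    (hmeas : Measurable X₁ ∧ Measurable X₂ ∧ Measurable X₂')
    (hindep : iIndepFun ![X₁, X₂, X₂'] μ)
    (hcopy : Measure.map X₂' μ = Measure.map X₂ μ)
    (M : Matrix (Fin n) (Fin n) ℝ) (hM : M.IsSymm) (u : Fin n → ℝ)
    (hint1 : Integrable (fun ω => Real.exp (∑ i, (X₁ ω i + X₂ ω i) * u i)) μ)
    (hint2 : Integrable (fun ω => Real.exp (∑ i, (X₂ ω i + X₂' ω i) * u i)) μ)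
    (hint3 : Integrable (fun ω => Real.exp (2 * ∑ i, X₁ ω i * u i)) μ) :
    ‖(∫ ω, Complex.exp
        (2 * (π : ℂ) * Complex.I *
            ((∑ i, M.mulVec (X₁ ω + X₂ ω) i * (X₁ ω + X₂ ω) i : ℝ) : ℂ)
          + ((∑ i, (X₁ ω i + X₂ ω i) * u i : ℝ) : ℂ)) ∂μ)‖ ^ 2
      ≤ ∫ ω, Real.exp (∑ i, (X₂ ω i + X₂' ω i) * u i) *
          ‖(∫ ω', Complex.exp
            (4 * (π : ℂ) * Complex.I *
                ((∑ i, M.mulVec (X₂ ω - X₂' ω) i * X₁ ω' i : ℝ) : ℂ)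
              + ((2 * ∑ i, X₁ ω' i * u i : ℝ) : ℂ)) ∂μ)‖ ∂μ := by
  obtain ⟨hX₁, hX₂, hX₂'⟩ := hmeas
  have : IsProbabilityMeasure (μ.map X₁) := Measure.isProbabilityMeasure_map hX₁.aemeasurable
  have : IsProbabilityMeasure (μ.map X₂) := Measure.isProbabilityMeasure_map hX₂.aemeasurable
  have hX₁₂ : μ.map (fun ω => (X₁ ω, X₂ ω)) = (μ.map X₁).prod (μ.map X₂) :=
    (indepFun_iff_map_prod_eq_prod_map_map hX₁.aemeasurable hX₂.aemeasurable).1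
      (hindep.indepFun (show (0 : Fin 3) ≠ 1 by decide))
  have hX₂₂ : μ.map (fun ω => (X₂ ω, X₂' ω)) = (μ.map X₂).prod (μ.map X₂) := by
    rw [(indepFun_iff_map_prod_eq_prod_map_map hX₂.aemeasurable hX₂'.aemeasurable).1
      (hindep.indepFun (show (1 : Fin 3) ≠ 2 by decide)), hcopy]
  have key := norm_integral_quadPhase_sq_le u hM (ν₁ := μ.map X₁) (ν₂ := μ.map X₂)
    (by rw [← hX₁₂]; exact (integrable_map_measure (by fun_prop) (by fun_prop)).2 hint1)
    ((integrable_map_measure (by fun_prop) hX₁.aemeasurable).2 hint3)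
    (by rw [← hX₂₂]; exact (integrable_map_measure (by fun_prop) (by fun_prop)).2 hint2)
  convert key using 1
  · rw [← hX₁₂, integral_map (by fun_prop) (by fun_prop)]
    rfl
  · rw [← hX₂₂, integral_map (by fun_prop)
      (measurable_exp_mul_norm_integral_bilinPhase M u _).aestronglyMeasurable]
    refine integral_congr_ae (.of_forall fun ω => ?_)
    dsimp only
    rw [integral_map (f := bilinPhase M u _) hX₁.aemeasurable (by fun_prop)]
    rfl

/-- Decoupling (Lemma 2.2): for `X = X₁ + X₂` with `X₁, X₂, X₂'` independent and `X₂'`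
a copy of `X₂`, a symmetric matrix `M`, `θ ∈ ℝ` and `u ∈ ℝⁿ`,
`|E e^{2πiθ⟨M X, X⟩ + ⟨X,u⟩}|² ≤ E_{X₂,X₂'}[e^{⟨X₂+X₂',u⟩} |E_{X₁} e^{4πiθ⟨M(X₂−X₂'),X₁⟩ + 2⟨X₁,u⟩}|]`.
The inner expectation over `X₁` is realized as an integral over an independent copy. -/
theorem stmt5 (n : ℕ) (Ω : Type*) [MeasurableSpace Ω] (μ : Measure Ω)
    [IsProbabilityMeasure μ]
    (X₁ X₂ X₂' : Ω → Fin n → ℝ)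
    (hmeas : Measurable X₁ ∧ Measurable X₂ ∧ Measurable X₂')
    (hindep : iIndepFun ![X₁, X₂, X₂'] μ)
    (hcopy : Measure.map X₂' μ = Measure.map X₂ μ)
    (M : Matrix (Fin n) (Fin n) ℝ) (hM : M.IsSymm) (θ : ℝ) (u : Fin n → ℝ)
    (hint1 : Integrable (fun ω => Real.exp (∑ i, (X₁ ω i + X₂ ω i) * u i)) μ)
    (hint2 : Integrable (fun ω => Real.exp (∑ i, (X₂ ω i + X₂' ω i) * u i)) μ)
    (hint3 : Integrable (fun ω => Real.exp (2 * ∑ i, X₁ ω i * u i)) μ) :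
    ‖(∫ ω, Complex.exp
        (2 * (π : ℂ) * Complex.I *
            ((∑ i, M.mulVec (X₁ ω + X₂ ω) i * (X₁ ω + X₂ ω) i : ℝ) : ℂ)
          + ((∑ i, (X₁ ω i + X₂ ω i) * u i : ℝ) : ℂ)) ∂μ)‖ ^ 2
      ≤ ∫ ω, Real.exp (∑ i, (X₂ ω i + X₂' ω i) * u i) *
          ‖(∫ ω', Complex.exp
            (4 * (π : ℂ) * Complex.I *
                ((∑ i, M.mulVec (X₂ ω - X₂' ω) i * X₁ ω' i : ℝ) : ℂ)
              + ((2 * ∑ i, X₁ ω' i * u i : ℝ) : ℂ)) ∂μ)‖ ∂μ :=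
  stmt5_general n Ω μ X₁ X₂ X₂' hmeas hindep hcopy M hM u hint1 hint2 hint3
end

section
/- For d ≥ 1 and s > 1, let A_d(s) denote the Lebesgue volume of the region {θ ∈ ℝ^d : ∏_{i=1}^d |θ_i| ≤ s^d and |θ_i| ≥ 1 for all i}. Then A_d is differentiable in s on (1,∞), its derivative is positive, and there exist a constant C_d and a polynomial p_d such that 0 < (d/ds) A_d(s) ≤ C_d s^{d−1} p_d(log s) for all s > 1. -/
/-!
Slicing along the first coordinate, the fibre of the `(d + 1)`-dimensional region with bound `T`
over `x` is the `d`-dimensional region with bound `T / |x|` when `1 ≤ |x|`, and empty otherwise.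
In logarithmic coordinates this makes the volume an iterated exponential convolution,
`A(T) = 2^d G_d(log T)` with `G_0 = 1` and `G_{d+1}(L) = ∫₀^L e^(L-w) G_d(w) dw`; so `G_d(L)` is the
integral of `exp (∑ uᵢ)` over the simplex `{u ≥ 0, ∑ uᵢ ≤ L}`. Hence `G_{d+1}' = G_{d+1} + G_d`,
which is positive for `L > 0`, and `G_d(L) ≤ e^L L^d / d!`. At `L = d log s` the factor `e^L = s^d`,
divided by the `s` coming from the chain rule, is the `s^(d-1)` of the bound.
-/

open MeasureTheory Real

noncomputable def expSimplexIntegral : ℕ → ℝ → ℝ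
  | 0, _ => 1
  | n + 1, L => ∫ w in (0 : ℝ)..L, exp (L - w) * expSimplexIntegral n w

namespace expSimplexIntegral

@[simp] lemma zero (L : ℝ) : expSimplexIntegral 0 L = 1 := rfl

lemma succ (n : ℕ) (L : ℝ) :
    expSimplexIntegral (n + 1) L = ∫ w in (0 : ℝ)..L, exp (L - w) * expSimplexIntegral n w := rfl

@[simp] lemma succ_zero (n : ℕ) : expSimplexIntegral (n + 1) 0 = 0 := by simp [succ]

lemma succ_eq_exp_mul (n : ℕ) (L : ℝ) :
    expSimplexIntegral (n + 1) L =
      exp L * ∫ w in (0 : ℝ)..L, exp (-w) * expSimplexIntegral n w := by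
  rw [succ, ← intervalIntegral.integral_const_mul]
  simp only [sub_eq_add_neg, exp_add, mul_assoc]

lemma hasDerivAt_succ_of_continuous {n : ℕ} (hn : Continuous (expSimplexIntegral n)) (L : ℝ) :
    HasDerivAt (expSimplexIntegral (n + 1))
      (expSimplexIntegral (n + 1) L + expSimplexIntegral n L) L := by
  have hcont : Continuous fun w => exp (-w) * expSimplexIntegral n w := by fun_prop
  have hint := intervalIntegral.integral_hasDerivAt_right (hcont.intervalIntegrable 0 L)
    hcont.aestronglyMeasurable.stronglyMeasurableAtFilter hcont.continuousAt
  have h := (hasDerivAt_exp L).mul hint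
  rw [exp_neg, mul_inv_cancel_left₀ (exp_ne_zero L), ← succ_eq_exp_mul] at h
  exact h.congr_of_eventuallyEq (.of_forall (succ_eq_exp_mul n))

lemma continuous : ∀ n, Continuous (expSimplexIntegral n)
  | 0 => continuous_const
  | n + 1 => continuous_iff_continuousAt.2 fun L =>
      (hasDerivAt_succ_of_continuous (continuous n) L).continuousAt

lemma hasDerivAt_succ (n : ℕ) (L : ℝ) :
    HasDerivAt (expSimplexIntegral (n + 1))
      (expSimplexIntegral (n + 1) L + expSimplexIntegral n L) L :=
  hasDerivAt_succ_of_continuous (continuous n) L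

lemma pos : ∀ (n : ℕ) {L : ℝ}, 0 < L → 0 < expSimplexIntegral n L
  | 0, _, _ => one_pos
  | n + 1, L, hL => by
    rw [succ]
    refine intervalIntegral.intervalIntegral_pos_of_pos_on ?_ (fun w hw => ?_) hL
    · exact ((continuous_const.sub continuous_id).rexp.mul (continuous n)).intervalIntegrable 0 L
    · exact mul_pos (exp_pos _) (pos n hw.1)

lemma nonneg (n : ℕ) {L : ℝ} (hL : 0 ≤ L) : 0 ≤ expSimplexIntegral n L := by
  rcases hL.lt_or_eq with hL | rfl
  · exact (pos n hL).le
  · cases n <;> simp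

lemma le_exp_mul_pow_div_factorial : ∀ (n : ℕ) {L : ℝ}, 0 ≤ L →
    expSimplexIntegral n L ≤ exp L * (L ^ n / n.factorial)
  | 0, L, hL => by simpa using one_le_exp hL
  | n + 1, L, hL => by
    have hcont : Continuous fun w => exp (L - w) * expSimplexIntegral n w := by
      have := continuous n; fun_prop
    have hcont' : Continuous fun w : ℝ => exp L * (w ^ n / n.factorial) := by fun_prop
    calc expSimplexIntegral (n + 1) L
        ≤ ∫ w in (0 : ℝ)..L, exp L * (w ^ n / n.factorial) := by
          refine intervalIntegral.integral_mono_on hL (hcont.intervalIntegrable 0 L)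
            (hcont'.intervalIntegrable 0 L) fun w hw => ?_
          calc exp (L - w) * expSimplexIntegral n w
              ≤ exp (L - w) * (exp w * (w ^ n / n.factorial)) :=
                mul_le_mul_of_nonneg_left (le_exp_mul_pow_div_factorial n hw.1) (exp_pos _).le
            _ = exp L * (w ^ n / n.factorial) := by rw [← mul_assoc, ← exp_add, sub_add_cancel]
      _ = exp L * (L ^ (n + 1) / (n + 1).factorial) := by
          rw [intervalIntegral.integral_const_mul, intervalIntegral.integral_div, integral_pow,
            Nat.factorial_succ]
          push_cast
          field_simp
          ring

lemma succ_log_eq_integral (n : ℕ) {T : ℝ} (hT : 0 < T) :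
    expSimplexIntegral (n + 1) (log T) = ∫ r in (1 : ℝ)..T, expSimplexIntegral n (log (T / r)) := by
  have hsub := intervalIntegral.integral_comp_mul_deriv' (a := 0) (b := log T)
    (f := fun w => exp (log T - w)) (f' := fun w => -exp (log T - w))
    (g := fun r => expSimplexIntegral n (log (T / r)))
    (fun w _ => by simpa using ((hasDerivAt_id w).const_sub (log T)).exp)
    (by fun_prop)
    ((continuous n).comp_continuousOn <|
      (continuousOn_const.div continuousOn_id (by rintro _ ⟨w, -, rfl⟩; exact (exp_pos _).ne')).log
        (by rintro _ ⟨w, -, rfl⟩; exact (div_pos hT (exp_pos _)).ne'))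
  simp only [Function.comp_def, sub_zero, sub_self, exp_zero, exp_log hT, exp_sub,
    div_div_cancel₀ hT.ne', mul_neg, log_exp] at hsub
  rw [intervalIntegral.integral_symm, ← hsub, intervalIntegral.integral_neg, neg_neg,
    succ]
  refine intervalIntegral.integral_congr fun w _ => ?_
  simp only [exp_sub, exp_log hT]
  ring

end expSimplexIntegral

theorem MeasureTheory.volume_eq_lintegral_volume_preimage_cons {α : Type*} [MeasureSpace α]
    [SigmaFinite (volume : Measure α)] {n : ℕ} {s : Set (Fin (n + 1) → α)} (hs : MeasurableSet s) :
    volume s = ∫⁻ x, volume ((fun y : Fin n → α => (Fin.cons x y : Fin (n + 1) → α)) ⁻¹' s) := by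
  have e := (volume_preserving_piFinSuccAbove (fun _ : Fin (n + 1) => α) 0).symm
  rw [← e.measure_preimage hs.nullMeasurableSet, Measure.volume_eq_prod,
    Measure.prod_apply (hs.preimage e.measurable)]
  simp only [MeasurableEquiv.piFinSuccAbove_symm_apply, Fin.insertNthEquiv_zero, Fin.consEquiv,
    Equiv.coe_fn_mk]
  rfl

def hyperbolicRegion (d : ℕ) (T : ℝ) : Set (Fin d → ℝ) :=
  {θ | (∏ i, |θ i|) ≤ T ∧ ∀ i, 1 ≤ |θ i|}

namespace hyperbolicRegion

lemma measurableSet (d : ℕ) (T : ℝ) : MeasurableSet (hyperbolicRegion d T) := by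
  simp only [hyperbolicRegion, Set.ofPred_and, Set.ofPred_forall]
  exact (measurableSet_le (by fun_prop) measurable_const).inter <|
    MeasurableSet.iInter fun i => measurableSet_le measurable_const (by fun_prop)

lemma eq_empty_of_lt_one {d : ℕ} {T : ℝ} (hT : T < 1) : hyperbolicRegion d T = ∅ :=
  Set.eq_empty_of_forall_notMem fun _ ⟨hprod, hone⟩ =>
    hT.not_ge <| (Finset.one_le_prod fun i _ => hone i).trans hprod

lemma zero_eq_univ_of_one_le {T : ℝ} (hT : 1 ≤ T) : hyperbolicRegion 0 T = Set.univ := by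
  simp [hyperbolicRegion, hT]

lemma cons_mem_iff {n : ℕ} {T x : ℝ} {y : Fin n → ℝ} :
    Fin.cons x y ∈ hyperbolicRegion (n + 1) T ↔ 1 ≤ |x| ∧ y ∈ hyperbolicRegion n (T / |x|) := by
  simp only [hyperbolicRegion, Set.mem_ofPred_eq, Fin.prod_univ_succ, Fin.forall_fin_succ,
    Fin.cons_zero, Fin.cons_succ]
  constructor
  · rintro ⟨hprod, hx, hy⟩
    exact ⟨hx, (le_div_iff₀' (one_pos.trans_le hx)).2 hprod, hy⟩
  · rintro ⟨hx, hprod, hy⟩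
    exact ⟨(le_div_iff₀' (one_pos.trans_le hx)).1 hprod, hx, hy⟩

end hyperbolicRegion

noncomputable def sliceVolume (n : ℕ) (T : ℝ) : ℝ → ℝ :=
  (Set.Icc 1 T).indicator fun r => 2 ^ n * expSimplexIntegral n (log (T / r))

lemma volume_preimage_cons_hyperbolicRegion {n : ℕ}
    (ih : ∀ T, 1 ≤ T →
      volume (hyperbolicRegion n T) = .ofReal (2 ^ n * expSimplexIntegral n (log T)))
    (T x : ℝ) :
    volume ((fun y : Fin n → ℝ => (Fin.cons x y : Fin (n + 1) → ℝ)) ⁻¹' hyperbolicRegion (n + 1) T)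
      = .ofReal (sliceVolume n T |x|) := by
  have hpre : (fun y : Fin n → ℝ => (Fin.cons x y : Fin (n + 1) → ℝ)) ⁻¹' hyperbolicRegion (n + 1) T
      = {y | 1 ≤ |x| ∧ y ∈ hyperbolicRegion n (T / |x|)} :=
    Set.ext fun y => hyperbolicRegion.cons_mem_iff
  rw [hpre]
  by_cases hx : 1 ≤ |x|
  · have hx0 : 0 < |x| := one_pos.trans_le hx
    simp only [sliceVolume, hx, true_and, Set.ofPred_mem_eq]
    by_cases hxT : |x| ≤ T
    · rw [ih _ ((one_le_div₀ hx0).2 hxT),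
        Set.indicator_of_mem (show |x| ∈ Set.Icc 1 T from ⟨hx, hxT⟩)]
    · rw [hyperbolicRegion.eq_empty_of_lt_one ((div_lt_one hx0).2 (lt_of_not_ge hxT)),
        measure_empty, Set.indicator_of_notMem fun h => hxT h.2, ENNReal.ofReal_zero]
  · simp [sliceVolume, hx]

lemma sliceVolume_nonneg (n : ℕ) (T r : ℝ) : 0 ≤ sliceVolume n T r :=
  Set.indicator_nonneg (fun _ hr => mul_nonneg (by positivity) <| expSimplexIntegral.nonneg n <|
    log_nonneg <| (one_le_div₀ (one_pos.trans_le hr.1)).2 hr.2) r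

lemma integrable_sliceVolume_comp_abs (n : ℕ) (T : ℝ) :
    Integrable fun x : ℝ => sliceVolume n T |x| := by
  have hK : IsCompact (abs ⁻¹' Set.Icc 1 T : Set ℝ) :=
    isCompact_Icc.of_isClosed_subset (isClosed_Icc.preimage continuous_abs)
      fun x hx => abs_le.1 hx.2
  have hcont : ContinuousOn (fun x : ℝ => 2 ^ n * expSimplexIntegral n (log (T / |x|)))
      (abs ⁻¹' Set.Icc 1 T) := fun x ⟨hx, hxT⟩ => by
    have hx0 : 0 < |x| := one_pos.trans_le hx
    refine (continuousAt_const.mul <| (expSimplexIntegral.continuous n).continuousAt.comp <|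
      (continuousAt_const.div continuous_abs.continuousAt hx0.ne').log ?_).continuousWithinAt
    exact (div_pos (hx0.trans_le hxT) hx0).ne'
  simp only [sliceVolume, ← Set.indicator_comp_right]
  exact (integrable_indicator_iff (measurableSet_Icc.preimage continuous_abs.measurable)).2
    (hcont.integrableOn_compact hK)

lemma integral_sliceVolume_comp_abs (n : ℕ) {T : ℝ} (hT : 1 ≤ T) :
    ∫ x : ℝ, sliceVolume n T |x| = 2 ^ (n + 1) * expSimplexIntegral (n + 1) (log T) := by
  have hIcc : Set.Ioi (0 : ℝ) ∩ Set.Icc 1 T = Set.Icc 1 T :=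
    Set.inter_eq_right.2 fun r hr => one_pos.trans_le hr.1
  rw [sliceVolume, integral_comp_abs, setIntegral_indicator measurableSet_Icc, hIcc,
    integral_Icc_eq_integral_Ioc, ← intervalIntegral.integral_of_le hT,
    intervalIntegral.integral_const_mul,
    expSimplexIntegral.succ_log_eq_integral n (one_pos.trans_le hT)]
  ring

lemma volume_hyperbolicRegion : ∀ (d : ℕ) {T : ℝ}, 1 ≤ T →
    volume (hyperbolicRegion d T) = .ofReal (2 ^ d * expSimplexIntegral d (log T))
  | 0, T, hT => by simp [hyperbolicRegion.zero_eq_univ_of_one_le hT, volume_pi]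
  | n + 1, T, hT => by
    rw [volume_eq_lintegral_volume_preimage_cons (hyperbolicRegion.measurableSet _ _),
      lintegral_congr <|
        volume_preimage_cons_hyperbolicRegion (fun _ => volume_hyperbolicRegion n) T,
      ← ofReal_integral_eq_lintegral_ofReal (integrable_sliceVolume_comp_abs n T),
      integral_sliceVolume_comp_abs n hT]
    exact .of_forall fun x => sliceVolume_nonneg n T |x|

lemma toReal_volume_hyperbolicRegion_pow (d : ℕ) {t : ℝ} (ht : 1 ≤ t) :
    (volume (hyperbolicRegion d (t ^ d))).toReal = 2 ^ d * expSimplexIntegral d (d * log t) := by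
  rw [volume_hyperbolicRegion d (one_le_pow₀ ht), log_pow, ENNReal.toReal_ofReal]
  exact mul_nonneg (by positivity) (expSimplexIntegral.nonneg d (by positivity [log_nonneg ht]))

lemma hasDerivAt_toReal_volume_hyperbolicRegion_pow (k : ℕ) {s : ℝ} (hs : 1 < s) :
    HasDerivAt (fun t => (volume (hyperbolicRegion (k + 1) (t ^ (k + 1)))).toReal)
      (2 ^ (k + 1) * (k + 1) / s * (expSimplexIntegral (k + 1) ((k + 1) * log s) +
        expSimplexIntegral k ((k + 1) * log s))) s := by
  have h := ((expSimplexIntegral.hasDerivAt_succ k _).comp s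
    ((hasDerivAt_log (zero_lt_one.trans hs).ne').const_mul ((k : ℝ) + 1))).const_mul (2 ^ (k + 1))
  refine (h.congr_deriv (by field_simp)).congr_of_eventuallyEq ?_
  filter_upwards [Ioi_mem_nhds hs] with t ht
  rw [toReal_volume_hyperbolicRegion_pow _ (le_of_lt ht)]
  push_cast
  rfl

/-- Lemma 8.2: let `A_d(s)` be the volume of
`{θ ∈ ℝ^d : ∏ᵢ |θᵢ| ≤ s^d, |θᵢ| ≥ 1 ∀i}`. Then on `(1,∞)` the function `A_d` is
differentiable with positive derivative, and there are a constant `C_d` and a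
polynomial `p_d` with `0 < A_d'(s) ≤ C_d s^{d−1} p_d(log s)` for all `s > 1`. -/
theorem stmt8 (d : ℕ) (hd : 1 ≤ d) :
    ∃ (C : ℝ) (p : Polynomial ℝ), ∀ s : ℝ, 1 < s →
      ∃ D : ℝ,
        HasDerivAt (fun t : ℝ =>
            (MeasureTheory.volume
              {θ : Fin d → ℝ | (∏ i, |θ i|) ≤ t ^ d ∧ ∀ i, 1 ≤ |θ i|}).toReal) D s ∧
        0 < D ∧ D ≤ C * s ^ (d - 1) * p.eval (Real.log s) := by
  obtain ⟨k, rfl⟩ := Nat.exists_eq_add_of_le' hd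
  open Polynomial in
  refine ⟨2 ^ (k + 1) * (k + 1), (C ((k : ℝ) + 1) * X) ^ (k + 1) * C ((k + 1).factorial : ℝ)⁻¹ +
    (C ((k : ℝ) + 1) * X) ^ k * C (k.factorial : ℝ)⁻¹, fun s hs => ?_⟩
  have hs0 : 0 < s := zero_lt_one.trans hs
  set L := ((k : ℝ) + 1) * log s
  have hL : 0 < L := by positivity [log_pos hs]
  refine ⟨_, hasDerivAt_toReal_volume_hyperbolicRegion_pow k hs, ?_, ?_⟩
  · positivity [expSimplexIntegral.pos k hL, expSimplexIntegral.pos (k + 1) hL]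
  · calc _ ≤ 2 ^ (k + 1) * (k + 1) / s * (exp L * (L ^ (k + 1) / (k + 1).factorial) +
            exp L * (L ^ k / k.factorial)) := by
          gcongr <;> exact expSimplexIntegral.le_exp_mul_pow_div_factorial _ hL.le
      _ = _ := by
          have hexp : exp L = s ^ (k + 1) := by
            rw [show L = ((k + 1 : ℕ) : ℝ) * log s by push_cast; rfl, ← log_pow,
              exp_log (pow_pos hs0 _)]
          simp only [hexp, Nat.add_sub_cancel, Polynomial.eval_add, Polynomial.eval_mul,
            Polynomial.eval_pow, Polynomial.eval_C, Polynomial.eval_X]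
          field_simp
          ring
end
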